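/- Let A be a left brace of cardinality p^n, k with p^{k(p−1)}A = 0, such that p^i A and ann(p^i) are ideals for all i, and (p^k A) * ann(p^{2k}) ⊆ ann(p^k). Fix ℘^{-1}: p^k A → A with p^k ℘^{-1}(x) = x. Then the operation [x] ⊙ [y] := [℘^{-1}((p^k x) * y)] on A/ann(p^{2k}) is well defined, i.e., independent of the choice of coset representatives x and y. -/
import Mathlib


universe u

class LeftBrace (A : Type u) extends AddCommGroup A where
  circ : A → A → A
  circ_assoc : ∀ a b c : A, circ (circ a b) c = circ a (circ b c)
  zero_circ : ∀ a : A, circ 0 a = a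
  circ_zero : ∀ a : A, circ a 0 = a
  cinv : A → A
  cinv_circ : ∀ a : A, circ (cinv a) a = 0
  circ_add : ∀ a b c : A, circ a (b + c) + a = circ a b + circ a c

namespace LeftBrace

variable {A : Type u} [LeftBrace A]

/-- `a * b = a∘b - a - b`. -/
def star (a b : A) : A := circ a b - a - b

/-- `cpow a j` is the `j`-th power of `a` in the group `(A, ∘)` (whose identity is `0`). -/
def cpow (a : A) : ℕ → A
  | 0 => 0
  | n+1 => circ a (cpow a n)

/-- `eFun a i = e_{i+1}(a)`: `eFun a 0 = a`, `eFun a (i+1) = a * eFun a i`. -/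
def eFun (a : A) : ℕ → A
  | 0 => a
  | i+1 => star a (eFun a i)

/-- `eStar a b i = e_{i+1}'(a,b)`: `eStar a b 0 = a*b`, `eStar a b (i+1) = a * eStar a b i`. -/
def eStar (a b : A) : ℕ → A
  | 0 => star a b
  | i+1 => star a (eStar a b i)

/-- `nSet A m = mA = {m a : a ∈ A}`. -/
def nSet (A : Type u) [LeftBrace A] (m : ℕ) : Set A := {x | ∃ a : A, m • a = x}

/-- `annSet A m = ann(m) = {a ∈ A : m a = 0}`. -/
def annSet (A : Type u) [LeftBrace A] (m : ℕ) : Set A := {a : A | m • a = 0}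

/-- An ideal of a brace: an additive subgroup closed under `i*a` and `a*i`. -/
def IsBraceIdeal (I : Set A) : Prop :=
  0 ∈ I ∧ (∀ x ∈ I, ∀ y ∈ I, x + y ∈ I) ∧ (∀ x ∈ I, -x ∈ I) ∧
    ∀ x ∈ I, ∀ a : A, star x a ∈ I ∧ star a x ∈ I

/-- Property 1': `e'_{⌊(p-1)/4⌋}(a,b) ∈ pA` for all `a, b`. -/
def Prop1' (A : Type u) [LeftBrace A] (p : ℕ) : Prop :=
  ∀ a b : A, eStar a b ((p-1)/4 - 1) ∈ nSet A p

/-- Property 1'': `e'_{⌊(p-1)/4⌋}(a, ann(p^i)) ⊆ ann(p^{i-1})` for all `i ≥ 1`. -/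
def Prop1'' (A : Type u) [LeftBrace A] (p : ℕ) : Prop :=
  ∀ i : ℕ, 1 ≤ i → ∀ a x : A, (p^i) • x = 0 →
    (p^(i-1)) • eStar a x ((p-1)/4 - 1) = 0


private lemma eq_of_sub_eq_sub' {x y u v : A} (h : x = y) (h2 : u - v = x - y) : u = v := by
  rw [h, sub_self, sub_eq_zero] at h2; exact h2

lemma circ_add' (a b c : A) : circ a (b + c) = circ a b + circ a c - a :=
  eq_sub_of_add_eq (circ_add a b c)

lemma circ_neg' (a b : A) : circ a (-b) = a + a - circ a b := by
  have h := circ_add' a b (-b)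
  rw [add_neg_cancel, circ_zero] at h
  refine eq_of_sub_eq_sub' h.symm ?_
  abel

lemma circ_cinv (a : A) : circ a (cinv a) = 0 := by
  have h1 := cinv_circ a
  have h2 := cinv_circ (cinv a)
  calc circ a (cinv a)
      = circ (circ (cinv (cinv a)) (cinv a)) (circ a (cinv a)) := by rw [h2, zero_circ]
    _ = circ (cinv (cinv a)) (circ (circ (cinv a) a) (cinv a)) := by
        rw [circ_assoc, ← circ_assoc (cinv a)]
    _ = 0 := by rw [h1, zero_circ, h2]

lemma star_add_right (a b c : A) : star a (b + c) = star a b + star a c := by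
  refine eq_of_sub_eq_sub' (circ_add' a b c) ?_
  simp only [star]; abel

lemma star_circ_left (a b c : A) :
    star (circ a b) c = star a (star b c) + star b c + star a c := by
  have e1 : circ b c - b - c = (circ b c + -b) + -c := by abel
  have h2 : circ a (circ b c - b - c) = circ a (circ b c) - circ a b - circ a c + (a + a) := by
    rw [e1, circ_add', circ_add', circ_neg', circ_neg']; abel
  simp only [star]
  rw [circ_assoc, h2]; abel

lemma circ_decomp (a d : A) : circ a (star (cinv a) d + d) = a + d := by
  have e1 : star (cinv a) d + d = circ (cinv a) d + -(cinv a) := by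
    simp only [star]; abel
  rw [e1, circ_add', circ_neg', ← circ_assoc, circ_cinv, zero_circ]; abel


end LeftBrace

open LeftBrace in
/-- the operation `[x] ⊙ [y] = [℘⁻¹((p^k x) * y)]` on `A/ann(p^{2k})`
is well defined: the value modulo `ann(p^{2k})` is independent of the choice of the
coset representatives `x` and `y`. -/
theorem statement15 {A : Type u} [LeftBrace A] (p n k : ℕ) (hp : p.Prime)
    (hcard : Nat.card A = p ^ n)
    (hk : ∀ x : A, (p ^ (k * (p - 1))) • x = 0)
    (hideal1 : ∀ i : ℕ, IsBraceIdeal (nSet A (p ^ i)))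
    (hideal2 : ∀ i : ℕ, IsBraceIdeal (annSet A (p ^ i)))
    (hmix : ∀ x ∈ nSet A (p ^ k), ∀ y ∈ annSet A (p ^ (2 * k)),
      star x y ∈ annSet A (p ^ k))
    (winv : A → A) (hw : ∀ x ∈ nSet A (p ^ k), (p ^ k) • winv x = x) :
    ∀ x x' y y' : A, x - x' ∈ annSet A (p ^ (2 * k)) → y - y' ∈ annSet A (p ^ (2 * k)) →
      winv (star ((p ^ k) • x) y) - winv (star ((p ^ k) • x') y') ∈ annSet A (p ^ (2 * k)) := by
  intro x x' y y' hx hy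
  simp only [annSet, Set.mem_setOf_eq] at hx hy ⊢
  obtain ⟨-, hadd, -, hstar⟩ := hideal2 k
  obtain ⟨-, -, -, hstar1⟩ := hideal1 k
  set u : A := (p ^ k) • x with hu_def
  set u' : A := (p ^ k) • x' with hu'_def
  have hu : u ∈ nSet A (p ^ k) := ⟨x, rfl⟩
  have hu' : u' ∈ nSet A (p ^ k) := ⟨x', rfl⟩
  have hpp : (p : ℕ) ^ (2 * k) = p ^ k * p ^ k := by rw [two_mul, pow_add]
  have hd : (u - u') ∈ annSet A (p ^ k) := by
    show (p ^ k) • (u - u') = 0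
    have h1 : u - u' = (p ^ k) • (x - x') := by rw [hu_def, hu'_def, smul_sub]
    rw [h1, ← mul_smul, ← hpp, hx]
  set e : A := star (cinv u') (u - u') + (u - u') with he_def
  have he : e ∈ annSet A (p ^ k) := hadd _ (hstar _ hd (cinv u')).2 _ hd
  have hue : u = circ u' e := by
    rw [he_def, circ_decomp]; abel
  have hs2 : star u y' - star u' y' = star u' (star e y') + star e y' := by
    rw [hue, star_circ_left]; abel
  have hs2mem : (p ^ k) • (star u y' - star u' y') = 0 := by
    rw [hs2]
    exact hadd _ (hstar _ (hstar _ he y').1 u').2 _ (hstar _ he y').1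
  have hs1 : star u y - star u y' = star u (y - y') := by
    have h2 := star_add_right u (y - y') y'
    rw [sub_add_cancel] at h2
    rw [h2]; abel
  have hs1mem : (p ^ k) • (star u y - star u y') = 0 := by
    rw [hs1]; exact hmix u hu (y - y') hy
  have hdiff : (p ^ k) • (star u y - star u' y') = 0 := by
    have h3 : star u y - star u' y' =
        (star u y - star u y') + (star u y' - star u' y') := by abel
    rw [h3, smul_add, hs1mem, hs2mem, add_zero]
  have hsw : (p ^ k) • winv (star u y) = star u y := hw _ (hstar1 _ hu y).1
  have hsw' : (p ^ k) • winv (star u' y') = star u' y' := hw _ (hstar1 _ hu' y').1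
  rw [hpp, smul_sub, mul_smul, mul_smul, hsw, hsw', ← smul_sub, hdiff]
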